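/- If a preference profile satisfies MaxProp, then it has a unique stable matching (it is in the class USM). -/

import Mathlib

open scoped Classical

noncomputable section

/-- A two-sided matching market with `n` men and `n` women, each with a complete
strict preference order over the other side. `mpref m k` is man `m`'s `k`-th
favourite woman (0 = top), and `wpref w k` is woman `w`'s `k`-th favourite man. -/
structure Profile (n : ℕ) where
  mpref : Fin n → (Fin n ≃ Fin n)
  wpref : Fin n → (Fin n ≃ Fin n)

namespace Profile

variable {n : ℕ}

/-- rank (0 = best) of woman `w` in man `m`'s preference list -/
def mrank (P : Profile n) (m w : Fin n) : ℕ := ((P.mpref m).symm w : ℕ)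

/-- rank (0 = best) of man `m` in woman `w`'s preference list -/
def wrank (P : Profile n) (w m : Fin n) : ℕ := ((P.wpref w).symm m : ℕ)

/-- man `m` strictly prefers woman `w` to woman `w'` -/
def mPrefers (P : Profile n) (m w w' : Fin n) : Prop := P.mrank m w < P.mrank m w'

/-- woman `w` strictly prefers man `m` to man `m'` -/
def wPrefers (P : Profile n) (w m m' : Fin n) : Prop := P.wrank w m < P.wrank w m'

/-- top choice of man `m` -/
def topM (P : Profile n) (m : Fin n) : Fin n := P.mpref m ⟨0, m.pos⟩

/-- top choice of woman `w` -/
def topW (P : Profile n) (w : Fin n) : Fin n := P.wpref w ⟨0, w.pos⟩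

/-- the profile with the roles of men and women exchanged -/
def swap (P : Profile n) : Profile n := ⟨P.wpref, P.mpref⟩

/-- State of the men-proposing deferred acceptance algorithm:
`next m` = number of proposals man `m` has made so far,
`held w` = the man woman `w` currently tentatively holds (if any). -/
structure DAState (n : ℕ) where
  next : Fin n → ℕ
  held : Fin n → Option (Fin n)

def initState (n : ℕ) : DAState n := ⟨fun _ => 0, fun _ => none⟩

/-- the men currently unmatched (held by no woman) -/
def unmatched (s : DAState n) : Finset (Fin n) :=
  Finset.univ.filter fun m => ∀ w : Fin n, s.held w ≠ some m

/-- the woman man `m` proposes to next: his most preferred woman among those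
who have not rejected him yet -/
def target (P : Profile n) (s : DAState n) (m : Fin n) : Fin n :=
  P.mpref m ⟨s.next m % n, Nat.mod_lt _ m.pos⟩

/-- the men proposing to woman `w` in the current round -/
def proposers (P : Profile n) (s : DAState n) (w : Fin n) : Finset (Fin n) :=
  (unmatched s).filter fun m => target P s m = w

/-- one round of the men-proposing deferred acceptance algorithm: every
unmatched man proposes to his favourite woman who has not rejected him yet,
and every woman tentatively holds her favourite among her current partner
and the new proposers, rejecting the rest -/
def step (P : Profile n) (s : DAState n) : DAState n where
  next := fun m => if m ∈ unmatched s then s.next m + 1 else s.next m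
  held := fun w => ((proposers P s w ∪ (s.held w).toFinset).toList).argmin (P.wrank w)

/-- the state after `k` rounds of men-proposing deferred acceptance -/
def stateAt (P : Profile n) (k : ℕ) : DAState n := (step P)^[k] (initState n)

/-- the final state of men-proposing deferred acceptance
(`n * n + 1` iterations is always enough to reach the fixed point) -/
def finalState (P : Profile n) : DAState n := stateAt P (n * n + 1)

/-- total number of proposals made during the men-proposing DA -/
def totalProposals (P : Profile n) : ℕ := ∑ m : Fin n, (finalState P).next m

/-- number of rounds of the men-proposing DA (rounds in which some proposal is made) -/
def rounds (P : Profile n) : ℕ :=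
  ((Finset.range (n * n + 1)).filter fun k => (unmatched (stateAt P k)).Nonempty).card

/-- total number of proposals received by woman `w` during the men-proposing DA -/
def proposalsTo (P : Profile n) (w : Fin n) : ℕ :=
  ∑ k ∈ Finset.range (n * n + 1), (proposers P (stateAt P k) w).card

/-- man `m` proposes to woman `w` at some point during the men-proposing DA -/
def proposedTo (P : Profile n) (m w : Fin n) : Prop :=
  ∃ k < n * n + 1, m ∈ proposers P (stateAt P k) w

/-- the men-proposing DA makes the maximum possible number `n² - n + 1` of proposals -/
def MaxProp (P : Profile n) : Prop := P.totalProposals = n * n + 1 - n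

/-- the men-proposing DA takes the maximum possible number `n² - 2n + 2` of rounds -/
def MaxRou (P : Profile n) : Prop := P.rounds = n * n + 2 - 2 * n

/-- a matching (a bijection man ↦ woman) is stable iff no man-woman pair mutually
prefer each other to their assigned partners -/
def Stable (P : Profile n) (μ : Fin n ≃ Fin n) : Prop :=
  ¬ ∃ (m w : Fin n), P.mPrefers m w (μ m) ∧ P.wPrefers w m (μ.symm w)

/-- the profile admits a unique stable matching -/
def USM (P : Profile n) : Prop := ∃! μ : Fin n ≃ Fin n, P.Stable μ

/-- the sequential preference condition of Eeckhout (2000) -/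
def SPC (P : Profile n) : Prop :=
  ∃ σ τ : Equiv.Perm (Fin n), ∀ i j : Fin n, i < j →
    P.mPrefers (σ i) (τ i) (τ j) ∧ P.wPrefers (τ i) (σ i) (σ j)

/-- the no crossing condition of Clark (2006) -/
def NCC (P : Profile n) : Prop :=
  ∃ σ τ : Equiv.Perm (Fin n), ∀ i j k l : Fin n, i < j → k < l →
    (P.mPrefers (σ i) (τ l) (τ k) → P.mPrefers (σ j) (τ l) (τ k)) ∧
    (P.wPrefers (τ k) (σ j) (σ i) → P.wPrefers (τ l) (σ j) (σ i))

end Profile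

/-!
In the last active round of men-proposing deferred acceptance, `u ≥ 1` men are unmatched and
`t ≥ u` women hold nobody; no man has proposed to any of these `t` women, so each has made at
most `n - t` proposals, and the total is at most `n (n - t) + t`. MaxProp forces `t = 1`: every
man has by then proposed to every woman except one woman `w₀`, whom all men rank last, so every
woman but `w₀` ends up holding her favourite man in the DA matching `μ`. If `ν` is stable, the
man-optimality of `μ` makes every woman weakly prefer `ν` to `μ`; hence `ν` and `μ` agree on
all women but `w₀`, and so everywhere.
-/

namespace Equiv

theorem eq_of_forall_ne_apply_eq {α β : Type*} {e f : α ≃ β} (a : α)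
    (h : ∀ x, x ≠ a → e x = f x) : e = f := by
  have ha : e a = f a := by
    by_contra hne
    have hb : f.symm (e a) ≠ a := fun hb => by
      nth_rewrite 2 [← hb] at hne
      exact hne (f.apply_symm_apply _).symm
    exact hb (e.injective ((h _ hb).trans (f.apply_symm_apply _)))
  ext x
  by_cases hx : x = a
  · rw [hx, ha]
  · exact h x hx

end Equiv

namespace Profile

open Finset

variable {n : ℕ} (P : Profile n)

lemma mrank_lt (m w : Fin n) : P.mrank m w < n := ((P.mpref m).symm w).isLt

lemma mrank_inj {m w w' : Fin n} (h : P.mrank m w = P.mrank m w') : w = w' :=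
  (P.mpref m).symm.injective (Fin.val_injective h)

lemma wrank_inj {w m m' : Fin n} (h : P.wrank w m = P.wrank w m') : m = m' :=
  (P.wpref w).symm.injective (Fin.val_injective h)

lemma target_eq_iff {s : DAState n} {m w : Fin n} (hlt : s.next m < n) :
    P.target s m = w ↔ P.mrank m w = s.next m := by
  rw [target, ← Equiv.eq_symm_apply, Fin.ext_iff, mrank, eq_comm]
  simp [Nat.mod_eq_of_lt hlt]

lemma mem_unmatched {s : DAState n} {m : Fin n} :
    m ∈ unmatched s ↔ ∀ w, s.held w ≠ some m := by
  simp [unmatched]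

lemma notMem_unmatched_of_held {s : DAState n} {m w : Fin n} (h : s.held w = some m) :
    m ∉ unmatched s := fun hm => mem_unmatched.mp hm w h

lemma mem_proposers {s : DAState n} {m w : Fin n} :
    m ∈ P.proposers s w ↔ m ∈ unmatched s ∧ P.target s m = w := by
  simp [proposers]

def unheld (s : DAState n) : Finset (Fin n) := univ.filter fun w => s.held w = none

lemma mem_unheld {s : DAState n} {w : Fin n} : w ∈ unheld s ↔ s.held w = none := by
  simp [unheld]

lemma step_next (s : DAState n) (m : Fin n) :
    (P.step s).next m = if m ∈ unmatched s then s.next m + 1 else s.next m := rfl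

lemma step_held_eq_some {s : DAState n} {w m : Fin n} (h : (P.step s).held w = some m) :
    m ∈ P.proposers s w ∨ s.held w = some m := by
  have hmem := List.argmin_mem (Option.mem_def.mpr h)
  simpa [mem_toList, Option.mem_def] using hmem

lemma exists_step_held_le {s : DAState n} {w m : Fin n}
    (h : m ∈ P.proposers s w ∨ s.held w = some m) :
    ∃ m', (P.step s).held w = some m' ∧ P.wrank w m' ≤ P.wrank w m := by
  have hm : m ∈ (P.proposers s w ∪ (s.held w).toFinset).toList := by
    simpa [mem_toList, Option.mem_def] using h
  cases h' : ((P.proposers s w ∪ (s.held w).toFinset).toList).argmin (P.wrank w) with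
  | none => exact absurd (List.argmin_eq_none.mp h') (List.ne_nil_of_mem hm)
  | some m' => exact ⟨m', h', List.le_of_mem_argmin hm (Option.mem_def.mpr h')⟩

/-- Proposals go down each man's list, so `P.mrank m w < s.next m` says that `m` has
proposed to `w`. -/
structure DAInv (s : DAState n) : Prop where
  held_of_proposed : ∀ m w, P.mrank m w < s.next m →
    ∃ m', s.held w = some m' ∧ P.wrank w m' ≤ P.wrank w m
  next_eq_of_held : ∀ m w, s.held w = some m → s.next m = P.mrank m w + 1
  held_inj : ∀ m w w', s.held w = some m → s.held w' = some m → w = w'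

namespace DAInv

variable {P} {s : DAState n}

lemma next_le_mrank_of_unheld (hI : P.DAInv s) {w : Fin n} (hw : s.held w = none) (m : Fin n) :
    s.next m ≤ P.mrank m w := by
  by_contra! hlt
  obtain ⟨m', hm', -⟩ := hI.held_of_proposed m w hlt
  simp [hw] at hm'

lemma card_unmatched_le_card_unheld (hI : P.DAInv s) : #(unmatched s) ≤ #(unheld s) := by
  have hheld : #(univ.filter fun w => ¬ s.held w = none) ≤
      #(univ.filter fun m => ¬ ∀ w, s.held w ≠ some m) := by
    refine card_le_card_of_injOn (fun w => (s.held w).getD w) ?_ ?_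
    · intro w hw
      obtain ⟨m, hm⟩ := Option.ne_none_iff_exists'.mp (mem_filter.mp hw).2
      simp only [coe_filter, mem_univ, true_and, Set.mem_ofPred_eq, not_forall, not_not]
      exact ⟨w, by simp [hm]⟩
    · intro w hw w' hw' he
      obtain ⟨m, hm⟩ := Option.ne_none_iff_exists'.mp (mem_filter.mp hw).2
      obtain ⟨m', hm'⟩ := Option.ne_none_iff_exists'.mp (mem_filter.mp hw').2
      simp only [hm, hm', Option.getD_some] at he
      exact hI.held_inj m w w' hm (he ▸ hm')
  have hw := card_filter_add_card_filter_not (s := univ) fun w => s.held w = none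
  have hm := card_filter_add_card_filter_not (s := univ) fun m => ∀ w, s.held w ≠ some m
  rw [unheld, unmatched]
  omega

lemma next_lt_of_mem_unmatched (hI : P.DAInv s) {m : Fin n} (hm : m ∈ unmatched s) :
    s.next m < n := by
  obtain ⟨w, hw⟩ :=
    card_pos.mp ((card_pos.mpr ⟨m, hm⟩).trans_le hI.card_unmatched_le_card_unheld)
  exact (hI.next_le_mrank_of_unheld (mem_unheld.mp hw) m).trans_lt (P.mrank_lt m w)

lemma next_le (hI : P.DAInv s) (m : Fin n) : s.next m ≤ n := by
  by_cases hm : m ∈ unmatched s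
  · exact (hI.next_lt_of_mem_unmatched hm).le
  · obtain ⟨w, hw⟩ : ∃ w, s.held w = some m := by simpa [mem_unmatched] using hm
    rw [hI.next_eq_of_held m w hw]
    exact P.mrank_lt m w

lemma next_add_card_unheld_le (hI : P.DAInv s) (m : Fin n) : s.next m + #(unheld s) ≤ n := by
  have himg : (unheld s).image (P.mrank m) ⊆ Ico (s.next m) n := fun r hr => by
    obtain ⟨w, hw, rfl⟩ := mem_image.mp hr
    exact mem_Ico.mpr ⟨hI.next_le_mrank_of_unheld (mem_unheld.mp hw) m, P.mrank_lt m w⟩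
  have hcard := card_le_card himg
  rw [card_image_of_injective _ fun _ _ => P.mrank_inj, Nat.card_Ico] at hcard
  have := hI.next_le m
  omega

lemma step (hI : P.DAInv s) : P.DAInv (P.step s) where
  held_of_proposed m w hlt := by
    have hold : m ∈ P.proposers s w ∨
        ∃ m'', s.held w = some m'' ∧ P.wrank w m'' ≤ P.wrank w m := by
      by_cases hprev : P.mrank m w < s.next m
      · exact Or.inr (hI.held_of_proposed m w hprev)
      · have hm : m ∈ unmatched s := by
          by_contra hm
          rw [step_next, if_neg hm] at hlt
          exact hprev hlt
        rw [step_next, if_pos hm] at hlt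
        exact Or.inl ((P.mem_proposers).mpr
          ⟨hm, (P.target_eq_iff (hI.next_lt_of_mem_unmatched hm)).mpr (by omega)⟩)
    rcases hold with hp | ⟨m'', h'', hle''⟩
    · exact P.exists_step_held_le (Or.inl hp)
    · obtain ⟨m', h', hle'⟩ := P.exists_step_held_le (Or.inr h'')
      exact ⟨m', h', hle'.trans hle''⟩
  next_eq_of_held m w h := by
    rcases P.step_held_eq_some h with hp | hh
    · obtain ⟨hm, htarget⟩ := (P.mem_proposers).mp hp
      rw [step_next, if_pos hm, (P.target_eq_iff (hI.next_lt_of_mem_unmatched hm)).mp htarget]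
    · rw [step_next, if_neg (notMem_unmatched_of_held hh)]
      exact hI.next_eq_of_held m w hh
  held_inj m w w' hw hw' := by
    rcases P.step_held_eq_some hw with hp | hh <;> rcases P.step_held_eq_some hw' with hp' | hh'
    · rw [← ((P.mem_proposers).mp hp).2, ← ((P.mem_proposers).mp hp').2]
    · exact absurd ((P.mem_proposers).mp hp).1 (notMem_unmatched_of_held hh')
    · exact absurd ((P.mem_proposers).mp hp').1 (notMem_unmatched_of_held hh)
    · exact hI.held_inj m w w' hh hh'

end DAInv

lemma stateAt_succ (k : ℕ) : P.stateAt (k + 1) = P.step (P.stateAt k) :=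
  Function.iterate_succ_apply' _ _ _

lemma daInv_stateAt (k : ℕ) : P.DAInv (P.stateAt k) := by
  induction k with
  | zero => exact ⟨by simp [stateAt, initState], by simp [stateAt, initState],
      by simp [stateAt, initState]⟩
  | succ k ih => rw [stateAt_succ]; exact ih.step

lemma step_eq_self {s : DAState n} (h : unmatched s = ∅) : P.step s = s := by
  have hprop : ∀ w, P.proposers s w = ∅ := fun w => by rw [proposers, h, filter_empty]
  obtain ⟨next, held⟩ := s
  simp only [step, h, notMem_empty, if_false, hprop, empty_union, DAState.mk.injEq, true_and]
  funext w
  cases held w <;> simp [List.argmin_singleton]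

lemma stateAt_add_of_unmatched_eq_empty {k : ℕ} (h : unmatched (P.stateAt k) = ∅) (j : ℕ) :
    P.stateAt (k + j) = P.stateAt k := by
  induction j with
  | zero => rfl
  | succ j ih => rw [← Nat.add_assoc, stateAt_succ, ih, P.step_eq_self h]

lemma sum_next_step (s : DAState n) :
    ∑ m, (P.step s).next m = ∑ m, s.next m + #(unmatched s) := by
  have h : ∀ m, (P.step s).next m = s.next m + if m ∈ unmatched s then 1 else 0 := fun m => by
    rw [step_next]; split_ifs <;> rfl
  simp [h, sum_add_distrib]

lemma le_sum_next_stateAt {k : ℕ} (h : ∀ j < k, (unmatched (P.stateAt j)).Nonempty) :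
    k ≤ ∑ m, (P.stateAt k).next m := by
  induction k with
  | zero => exact Nat.zero_le _
  | succ k ih =>
    rw [stateAt_succ, sum_next_step]
    have := (h k k.lt_succ_self).card_pos
    have := ih fun j hj => h j (hj.trans k.lt_succ_self)
    omega

lemma exists_unmatched_stateAt_eq_empty : ∃ k ≤ n * n, unmatched (P.stateAt k) = ∅ := by
  by_contra! hc
  have hlow := P.le_sum_next_stateAt (k := n * n + 1) fun j hj => hc j (by omega)
  have hup : ∑ m, (P.stateAt (n * n + 1)).next m ≤ n * n :=
    calc _ ≤ ∑ _m : Fin n, n := sum_le_sum fun m _ => (P.daInv_stateAt _).next_le m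
      _ = n * n := by simp
  omega

lemma finalState_eq_stateAt {k : ℕ} (hk : k ≤ n * n + 1) (h : unmatched (P.stateAt k) = ∅) :
    P.finalState = P.stateAt k := by
  rw [finalState, show n * n + 1 = k + (n * n + 1 - k) by omega,
    P.stateAt_add_of_unmatched_eq_empty h]

lemma unmatched_finalState : unmatched P.finalState = ∅ := by
  obtain ⟨k, hk, h⟩ := P.exists_unmatched_stateAt_eq_empty
  rwa [P.finalState_eq_stateAt (by omega) h]

lemma exists_finalState_eq_step (hn : 0 < n) :
    ∃ k, (unmatched (P.stateAt k)).Nonempty ∧ P.finalState = P.step (P.stateAt k) := by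
  have hex : ∃ k, unmatched (P.stateAt k) = ∅ := ⟨_, P.unmatched_finalState⟩
  have hK : Nat.find hex ≠ 0 := by
    intro h0
    have hinit : (⟨0, hn⟩ : Fin n) ∈ unmatched (P.stateAt 0) := by
      simp [mem_unmatched, stateAt, initState]
    simp [← h0, Nat.find_spec hex] at hinit
  obtain ⟨k, hk⟩ := Nat.exists_eq_add_one_of_ne_zero hK
  refine ⟨k, nonempty_iff_ne_empty.mpr (Nat.find_min hex (by omega)), ?_⟩
  rw [← stateAt_succ, ← hk]
  exact P.finalState_eq_stateAt (Nat.find_min' hex P.unmatched_finalState) (Nat.find_spec hex)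

lemma exists_equiv_held_of_unmatched_eq_empty {s : DAState n} (h : unmatched s = ∅) :
    ∃ μ : Fin n ≃ Fin n, ∀ m, s.held (μ m) = some m := by
  have hmatched : ∀ m, ∃ w, s.held w = some m := fun m => by
    by_contra! hm
    simpa [h] using mem_unmatched.mpr hm
  choose f hf using hmatched
  have hinj : Function.Injective f := fun a b hab =>
    Option.some_injective _ ((hf a).symm.trans (hab ▸ hf b))
  exact ⟨Equiv.ofBijective f (Finite.injective_iff_bijective.mp hinj), hf⟩

namespace DAInv

variable {P} {s : DAState n} {μ : Fin n ≃ Fin n}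

lemma wrank_symm_le (hI : P.DAInv s) (hμ : ∀ m, s.held (μ m) = some m) {m w : Fin n}
    (h : P.mrank m w < s.next m) : P.wrank w (μ.symm w) ≤ P.wrank w m := by
  obtain ⟨m', hm', hle⟩ := hI.held_of_proposed m w h
  have hw := hμ (μ.symm w)
  rw [μ.apply_symm_apply, hm'] at hw
  rwa [← Option.some_injective _ hw]

lemma stable (hI : P.DAInv s) (hμ : ∀ m, s.held (μ m) = some m) : P.Stable μ := by
  rintro ⟨m, w, hm, hw⟩
  have hle := hI.wrank_symm_le hμ (m := m) (w := w)
    (by rw [hI.next_eq_of_held m _ (hμ m)]; exact Nat.lt_succ_of_lt hm)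
  exact absurd hw (not_lt.mpr hle)

/-- A man rejected by `ν m` was rejected for some `m'` whom `ν m` prefers and who, by `hs`,
prefers `ν m` to `ν m'`: a blocking pair for `ν`. -/
lemma next_le_mrank_of_stable (hI : P.DAInv s) {ν : Fin n ≃ Fin n} (hν : P.Stable ν)
    (hs : ∀ m, s.next m ≤ P.mrank m (ν m) + 1) {m : Fin n} (hm : m ∈ unmatched s) :
    s.next m ≤ P.mrank m (ν m) := by
  by_contra! hlt
  obtain ⟨m', hm', hle⟩ := hI.held_of_proposed m (ν m) hlt
  have hne : m' ≠ m := by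
    rintro rfl
    exact mem_unmatched.mp hm _ hm'
  have hnext := hI.next_eq_of_held m' (ν m) hm'
  have hpref : P.mrank m' (ν m) < P.mrank m' (ν m') :=
    lt_of_le_of_ne (by have := hs m'; omega) fun he => ν.injective.ne hne (P.mrank_inj he).symm
  refine hν ⟨m', ν m, hpref, ?_⟩
  rw [ν.symm_apply_apply]
  exact lt_of_le_of_ne hle fun he => hne (P.wrank_inj he)

lemma card_unheld_eq_one_and_next_eq (hI : P.DAInv s) (hs : (unmatched s).Nonempty)
    (hsum : ∑ m, s.next m + #(unmatched s) = n * n + 1 - n) :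
    #(unheld s) = 1 ∧ ∀ m, s.next m = n - 1 := by
  have hu := hs.card_pos
  have hut := hI.card_unmatched_le_card_unheld
  have hbound := hI.next_add_card_unheld_le
  obtain ⟨m₀, -⟩ := hs
  have htn : #(unheld s) ≤ n := by have := hbound m₀; omega
  have htot : ∑ m, s.next m + n * #(unheld s) ≤ n * n :=
    calc ∑ m, s.next m + n * #(unheld s) = ∑ m, (s.next m + #(unheld s)) := by
          simp [sum_add_distrib]
      _ ≤ ∑ _m : Fin n, n := sum_le_sum fun m _ => hbound m
      _ = n * n := by simp
  have ht : #(unheld s) = 1 := by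
    have := Nat.le_mul_self n
    have : ∑ m, s.next m + #(unmatched s) + n = n * n + 1 := by omega
    nlinarith
  refine ⟨ht, ?_⟩
  have hle : ∀ m ∈ univ, s.next m ≤ n - 1 := fun m _ => by have := hbound m; omega
  have heq := (sum_eq_sum_iff_of_le hle).mp (by simp [Nat.mul_sub_one]; omega)
  exact fun m => heq m (mem_univ m)

end DAInv

lemma next_stateAt_le_of_stable {ν : Fin n ≃ Fin n} (hν : P.Stable ν) (k : ℕ) (m : Fin n) :
    (P.stateAt k).next m ≤ P.mrank m (ν m) + 1 := by
  induction k generalizing m with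
  | zero => simp [stateAt, initState]
  | succ k ih =>
    rw [stateAt_succ, step_next]
    split_ifs with hm
    · exact Nat.succ_le_succ ((P.daInv_stateAt k).next_le_mrank_of_stable hν ih hm)
    · exact ih m

lemma mrank_le_of_stable {μ ν : Fin n ≃ Fin n} (hμ : ∀ m, P.finalState.held (μ m) = some m)
    (hν : P.Stable ν) (m : Fin n) : P.mrank m (μ m) ≤ P.mrank m (ν m) := by
  have hI : P.DAInv P.finalState := P.daInv_stateAt _
  have := P.next_stateAt_le_of_stable hν (n * n + 1) m
  rw [← finalState, hI.next_eq_of_held m _ (hμ m)] at this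
  omega

lemma wrank_symm_le_of_stable {μ ν : Fin n ≃ Fin n} (hν : P.Stable ν)
    (hmen : ∀ m, P.mrank m (μ m) ≤ P.mrank m (ν m)) (w : Fin n) :
    P.wrank w (ν.symm w) ≤ P.wrank w (μ.symm w) := by
  obtain ⟨m, rfl⟩ := μ.surjective w
  rw [μ.symm_apply_apply]
  by_contra! hlt
  have hne : ν m ≠ μ m := fun h => by
    rw [← h, ν.symm_apply_apply] at hlt
    exact lt_irrefl _ hlt
  exact hν ⟨m, μ m, lt_of_le_of_ne (hmen m) fun he => hne (P.mrank_inj he).symm, hlt⟩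

variable {P} in
theorem MaxProp.exists_forall_ne_mrank_lt_next (h : P.MaxProp) (hn : 0 < n) :
    ∃ w₀, ∀ m w, w ≠ w₀ → P.mrank m w < P.finalState.next m := by
  obtain ⟨k, hk, hfinal⟩ := P.exists_finalState_eq_step hn
  have hI := P.daInv_stateAt k
  obtain ⟨hunheld, hnext⟩ :=
    hI.card_unheld_eq_one_and_next_eq hk (by rw [← P.sum_next_step, ← hfinal]; exact h)
  obtain ⟨w₀, hw₀⟩ := card_eq_one.mp hunheld
  have hw₀none : (P.stateAt k).held w₀ = none :=
    mem_unheld.mp (hw₀ ▸ mem_singleton_self w₀)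
  refine ⟨w₀, fun m w hw => ?_⟩
  have hlast : n - 1 ≤ P.mrank m w₀ := hnext m ▸ hI.next_le_mrank_of_unheld hw₀none m
  have hne : P.mrank m w ≠ P.mrank m w₀ := fun he => hw (P.mrank_inj he)
  have hmono : (P.stateAt k).next m ≤ P.finalState.next m := by
    rw [hfinal, step_next]
    split_ifs <;> omega
  have := hnext m
  have := P.mrank_lt m w
  have := P.mrank_lt m w₀
  omega

end Profile

/-- If a profile satisfies MaxProp, then it has a unique stable matching. -/
theorem maxProp_implies_USM (n : ℕ) (P : Profile n) (h : P.MaxProp) :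
    P.USM := by
  rcases Nat.eq_zero_or_pos n with rfl | hn
  · exact ⟨Equiv.refl _, fun ⟨m, _⟩ => m.elim0, fun _ _ => Subsingleton.elim _ _⟩
  have hI : P.DAInv P.finalState := P.daInv_stateAt _
  obtain ⟨μ, hμ⟩ := Profile.exists_equiv_held_of_unmatched_eq_empty P.unmatched_finalState
  obtain ⟨w₀, hw₀⟩ := h.exists_forall_ne_mrank_lt_next hn
  refine ⟨μ, hI.stable hμ, fun ν hν => ?_⟩
  have hwomen := P.wrank_symm_le_of_stable hν (P.mrank_le_of_stable hμ hν)
  have htop : ∀ w ≠ w₀, ∀ m, P.wrank w (μ.symm w) ≤ P.wrank w m :=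
    fun w hw m => hI.wrank_symm_le hμ (hw₀ m w hw)
  have hsymm : ν.symm = μ.symm := Equiv.eq_of_forall_ne_apply_eq w₀ fun w hw =>
    P.wrank_inj ((hwomen w).antisymm (htop w hw _))
  simpa using congrArg Equiv.symm hsymm
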